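/- arXiv:1303.3907 — 2 statements merged into one kernel-verified Lean document; each statement's English description precedes it below -/
import Mathlib

section
/- Let φ : (G,P) → (G',P') be a fibration of networks. Then the pullback map φ* : S(G',P') → S(G,P), defined by (φ*w')_a = Ctrl(φ_a)⁻¹(w'_{φ(a)}) where φ_a : I(a) → I(φ(a)) is the induced isomorphism of input trees, is linear and maps the subspace V(G',P') of groupoid-invariant virtual vector fields into V(G,P). -/
open Manifold

structure DGraph where
  V : Type
  E : Type
  src : E → V
  tgt : E → V

/-- A map of directed multigraphs: functions on edges and vertices commuting with
source and target. -/
structure GraphMap (G G' : DGraph) where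
  vmap : G.V → G'.V
  emap : G.E → G'.E
  src_eq : ∀ e, G'.src (emap e) = vmap (G.src e)
  tgt_eq : ∀ e, G'.tgt (emap e) = vmap (G.tgt e)

/-- `φ` is a graph fibration if for every vertex `a` of `G` and every edge `e'` of `G'`
with target `φ(a)`, there is a unique edge `e` of `G` with target `a` and `φ(e) = e'`. -/
def GraphMap.IsFibration {G G' : DGraph} (φ : GraphMap G G') : Prop :=
  ∀ (a : G.V) (e' : G'.E), G'.tgt e' = φ.vmap a →
    ∃! e : G.E, G.tgt e = a ∧ φ.emap e = e'

/-- The set of edges of `G` with target `a`. -/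
abbrev inEdges (G : DGraph) (a : G.V) : Type := {e : G.E // G.tgt e = a}

/-- The input tree `I(a)` of a vertex `a`: its vertices are `{a} ⊔ t⁻¹(a)` (the root `a`
is encoded as `none`, the leaf `γ ∈ t⁻¹(a)` as `some γ`), its edges are the pairs `(a, γ)`
for `γ ∈ t⁻¹(a)`, with source `γ` and target the root `a`. -/
def inputTree (G : DGraph) (a : G.V) : DGraph where
  V := Option (inEdges G a)
  E := inEdges G a
  src := fun γ => some γ
  tgt := fun _ => none

/-- An isomorphism of graphs is a graph map bijective on vertices and on edges. -/
def GraphMap.IsIso {G G' : DGraph} (φ : GraphMap G G') : Prop :=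
  Function.Bijective φ.vmap ∧ Function.Bijective φ.emap


/-- An isomorphism of input networks `(I(a), P ∘ ξ_a) → (I(a'), P' ∘ ξ_{a'})`.
Since any isomorphism of height-1 trees sends root to root and is determined by its
action on the leaves (equivalently, on the edges), it is given by a bijection `e` of the
sets of incoming edges; the network (phase-preserving) condition says that the root
phases agree (`hr`) and the phases of corresponding leaves agree (`hl`). -/
structure InputIso {ι : Type} (G : DGraph) (P : G.V → ι) (G' : DGraph) (P' : G'.V → ι)
    (a : G.V) (a' : G'.V) where
  e : inEdges G a ≃ inEdges G' a'
  hr : P' a' = P a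
  hl : ∀ γ : inEdges G a, P' (G'.src ((e γ) : inEdges G' a').1) = P (G.src γ.1)

/-- The identity isomorphism of an input network. -/
def InputIso.refl {ι : Type} (G : DGraph) (P : G.V → ι) (a : G.V) :
    InputIso G P G P a a :=
  ⟨Equiv.refl _, rfl, fun _ => rfl⟩

/-- Composition of isomorphisms of input networks. -/
def InputIso.comp {ι : Type} {G : DGraph} {P : G.V → ι} {G' : DGraph} {P' : G'.V → ι}
    {G'' : DGraph} {P'' : G''.V → ι} {a : G.V} {a' : G'.V} {a'' : G''.V}
    (σ : InputIso G P G' P' a a') (σ' : InputIso G' P' G'' P'' a' a'') :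
    InputIso G P G'' P'' a a'' :=
  ⟨σ.e.trans σ'.e, σ'.hr.trans σ.hr, fun γ => (σ'.hl (σ.e γ)).trans (σ.hl γ)⟩

/-- The inverse of an isomorphism of input networks. -/
def InputIso.inv {ι : Type} {G : DGraph} {P : G.V → ι} {G' : DGraph} {P' : G'.V → ι}
    {a : G.V} {a' : G'.V} (σ : InputIso G P G' P' a a') : InputIso G' P' G P a' a :=
  ⟨σ.e.symm, σ.hr.symm, fun γ' => by
    have h := σ.hl (σ.e.symm γ')
    rw [Equiv.apply_symm_apply] at h
    exact h.symm⟩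

variable {ι : Type} {EE : ι → Type} [∀ i, NormedAddCommGroup (EE i)]
  [∀ i, NormedSpace ℝ (EE i)] {HH : ι → Type} [∀ i, TopologicalSpace (HH i)]
  (II : ∀ i, ModelWithCorners ℝ (EE i) (HH i))
  (MM : ι → Type) [∀ i, TopologicalSpace (MM i)] [∀ i, ChartedSpace (HH i) (MM i)]
  [∀ i, IsManifold (II i) ((⊤ : ℕ∞) : WithTop ℕ∞) (MM i)]

/-- The total phase space `P I(a) = P(a) × ⊓_{γ ∈ t⁻¹(a)} P(s(γ))` of the input network
of the vertex `a` of the network `(G, P)` (phase spaces drawn from the family of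
manifolds `MM` via the index function `P : G.V → ι`). -/
abbrev PIn (G : DGraph) (P : G.V → ι) (a : G.V) : Type :=
  MM (P a) × ((γ : inEdges G a) → MM (P (G.src γ.1)))

/-- The underlying (not necessarily smooth) sections of the control space
`Ctrl(P I(a) → P a)`: maps `F` from `P I(a)` to the tangent bundle of `P a = P(a)` with
`F q ∈ T_{p(q)} P(a)`, where `p : P I(a) → P(a)` is the projection onto the root factor. -/
abbrev Raw (G : DGraph) (P : G.V → ι) (a : G.V) : Type :=
  (q : PIn MM G P a) → TangentSpace (II (P a)) q.1

/-- The model with corners for the manifold `P I(a)`. -/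
noncomputable def PInModel (G : DGraph) [Fintype G.E] [DecidableEq G.V]
    (P : G.V → ι) (a : G.V) :
    ModelWithCorners ℝ (EE (P a) × ((γ : inEdges G a) → EE (P (G.src γ.1))))
      (ModelProd (HH (P a)) (ModelPi fun γ : inEdges G a => HH (P (G.src γ.1)))) :=
  (II (P a)).prod (ModelWithCorners.pi fun γ : inEdges G a => II (P (G.src γ.1)))

/-- Smoothness of an element of `Ctrl(P I(a) → P a)`, as a map into the tangent bundle.
`Ctrl(P I(a) → P a)` is the vector space of smooth maps `F : P I(a) → T P(a)` with
`F q ∈ T_{p(q)} P(a)`, i.e. the subspace of smooth elements of `Raw`. -/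
def IsSmoothCtrl (G : DGraph) [Fintype G.E] [DecidableEq G.V] (P : G.V → ι) (a : G.V)
    (F : Raw II MM G P a) : Prop :=
  ContMDiff (PInModel II G P a) (II (P a)).tangent (⊤ : ℕ∞)
    (fun q => Bundle.TotalSpace.mk q.1 (F q) :
      PIn MM G P a → TangentBundle (II (P a)) (MM (P a)))

/-- The map `P φ : P I(a') → P I(a)` of total phase spaces of input networks induced
(contravariantly) by an isomorphism `φ` of input networks. -/
def phaseIn {G : DGraph} {P : G.V → ι} {G' : DGraph} {P' : G'.V → ι} {a : G.V}
    {a' : G'.V} (σ : InputIso G P G' P' a a') : PIn MM G' P' a' → PIn MM G P a :=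
  fun q => (cast (congrArg MM σ.hr) q.1,
    fun γ => cast (congrArg MM (σ.hl γ)) (q.2 (σ.e γ)))

/-- Transport of tangent vectors along an equality of phase space indices; this is the
differential of the induced diffeomorphism of phase spaces (a `cast`). -/
def tcast {i j : ι} (h : i = j) {x : MM i} {y : MM j} (v : TangentSpace (II i) x) :
    TangentSpace (II j) y :=
  cast (congrArg EE h) v

/-- The map `Ctrl(φ) : Ctrl(P I(a) → P a) → Ctrl(P I(a') → P a')`,
`Ctrl(φ)(F) = D(P(φ|ₐ))⁻¹ ∘ F ∘ P φ`, induced by an isomorphism `φ` of input networks: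
here `P(φ|ₐ) : P(a') → P(a)` is the diffeomorphism (a `cast`) induced by the restriction
of `φ` to the root, and its differential is `tcast`. -/
def ctrlMap {G : DGraph} {P : G.V → ι} {G' : DGraph} {P' : G'.V → ι} {a : G.V}
    {a' : G'.V} (σ : InputIso G P G' P' a a') :
    Raw II MM G P a → Raw II MM G' P' a' :=
  fun F q' => tcast II MM σ.hr.symm (F (phaseIn MM σ q'))

/-- A virtual vector field on the network `(G, P)`, i.e. a section of the control bundle,
is smooth if each of its components is a smooth control system. -/
def IsSmoothSec (G : DGraph) [Fintype G.E] [DecidableEq G.V] (P : G.V → ι)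
    (w : ∀ a, Raw II MM G P a) : Prop :=
  ∀ a, IsSmoothCtrl II MM G P a (w a)

/-- A virtual vector field `w` on `(G, P)` is invariant under the symmetry groupoid if
`Ctrl(σ) (w a) = w b` for every isomorphism `σ : (I(a), P∘ξ_a) → (I(b), P∘ξ_b)` of input
networks.  Together with smoothness this cuts out `V(G,P) ⊆ S(G,P)`. -/
def IsInvariantSec (G : DGraph) (P : G.V → ι) (w : ∀ a, Raw II MM G P a) : Prop :=
  ∀ (a b : G.V) (σ : InputIso G P G P a b), ctrlMap II MM σ (w a) = w b

/-- The isomorphism of input networks `φ_a : (I(a), P∘ξ_a) → (I(φ(a)), P'∘ξ_{φ(a)})`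
induced by a fibration of networks `φ : (G,P) → (G',P')`. -/
noncomputable def fibIso {G G' : DGraph} (φ : GraphMap G G') (hφ : φ.IsFibration)
    {P : G.V → ι} {P' : G'.V → ι} (h : ∀ a, P' (φ.vmap a) = P a) (a : G.V) :
    InputIso G P G' P' a (φ.vmap a) where
  e :=
    { toFun := fun γ => ⟨φ.emap γ.1, by rw [φ.tgt_eq, γ.2]⟩
      invFun := fun γ' => ⟨Exists.choose (hφ a γ'.1 γ'.2),
        (Exists.choose_spec (hφ a γ'.1 γ'.2)).1.1⟩
      left_inv := fun γ => Subtype.ext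
        (((Exists.choose_spec (hφ a (φ.emap γ.1) (by rw [φ.tgt_eq, γ.2]))).2 γ.1
          ⟨γ.2, rfl⟩).symm)
      right_inv := fun γ' => Subtype.ext
        (Exists.choose_spec (hφ a γ'.1 γ'.2)).1.2 }
  hr := h a
  hl := fun γ => by
    show P' (G'.src (φ.emap γ.1)) = P (G.src γ.1)
    rw [φ.src_eq]; exact h _

/-- The pullback map `φ* : S(G',P') → S(G,P)` of virtual vector fields along a fibration
of networks `φ`, defined by `(φ* w')_a = Ctrl(φ_a)⁻¹ (w'_{φ(a)})`. -/
noncomputable def pullbackVF {G G' : DGraph} (φ : GraphMap G G') (hφ : φ.IsFibration)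
    {P : G.V → ι} {P' : G'.V → ι} (h : ∀ a, P' (φ.vmap a) = P a)
    (w' : ∀ a', Raw II MM G' P' a') : ∀ a, Raw II MM G P a :=
  fun a => ctrlMap II MM (fibIso φ hφ h a).inv (w' (φ.vmap a))

/-!
Each `Ctrl(σ)` is a cast of tangent vectors precomposed with the smooth map `Pσ` of phase
spaces, so it is linear and preserves smoothness; moreover `σ ↦ Ctrl(σ)` is functorial.
Given a symmetry `σ : a → b` of `(G, P)`, the conjugate `φ_a⁻¹ ≫ σ ≫ φ_b` is a symmetry
`φ(a) → φ(b)` of `(G', P')`, and functoriality turns invariance of `w'` under it into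
invariance of `φ* w'` under `σ`.
-/

section PiManifold

variable {𝕜 : Type*} [NontriviallyNormedField 𝕜] {n : WithTop ℕ∞}
  {κ : Type*} [Fintype κ] {F : Type*} [NormedAddCommGroup F] [NormedSpace 𝕜 F]
  {K : Type*} [TopologicalSpace K] {J : ModelWithCorners 𝕜 F K}
  {N : Type*} [TopologicalSpace N] [ChartedSpace K N]
  {E : κ → Type*} [∀ k, NormedAddCommGroup (E k)] [∀ k, NormedSpace 𝕜 (E k)]
  {H : κ → Type*} [∀ k, TopologicalSpace (H k)] {I : ∀ k, ModelWithCorners 𝕜 (E k) (H k)}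
  {M : κ → Type*} [∀ k, TopologicalSpace (M k)] [∀ k, ChartedSpace (H k) (M k)]

theorem contMDiff_apply_pi (k : κ) :
    ContMDiff (ModelWithCorners.pi I) (I k) n (fun f : ∀ k, M k => f k) := by
  intro p
  set e := extChartAt (ModelWithCorners.pi I) p
  refine contMDiffAt_iff.2 ⟨(continuous_apply k).continuousAt, ?_⟩
  refine ContDiffWithinAt.congr_of_eventuallyEq (f := fun y : ∀ k, E k => y k)
    (ContinuousLinearMap.proj k : (∀ k, E k) →L[𝕜] E k).contDiff.contDiffWithinAt ?_ ?_
  · exact Filter.eventuallyEq_of_mem (extChartAt_target_mem_nhdsWithin p)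
      fun y hy => congrFun (e.right_inv hy) k
  · exact congrFun (e.right_inv (e.map_source (mem_extChartAt_source p))) k

theorem contMDiff_pi_iff {f : N → ∀ k, M k} :
    ContMDiff J (ModelWithCorners.pi I) n f ↔ ∀ k, ContMDiff J (I k) n fun x => f x k := by
  refine ⟨fun hf k => (contMDiff_apply_pi k).comp hf, fun hf x => ?_⟩
  have hx : ∀ k, ContMDiffAt J (I k) n (fun x => f x k) x := fun k => hf k x
  exact contMDiffAt_iff.2 ⟨continuousAt_pi.2 fun k => (hx k).continuousAt,
    contDiffWithinAt_pi.2 fun k => (contMDiffAt_iff.1 (hx k)).2⟩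

end PiManifold

section Network

variable {E : ι → Type} [∀ i, NormedAddCommGroup (E i)] [∀ i, NormedSpace ℝ (E i)]
  {H : ι → Type} [∀ i, TopologicalSpace (H i)] (I : ∀ i, ModelWithCorners ℝ (E i) (H i))
  (M : ι → Type)
  {G : DGraph} {P : G.V → ι} {G' : DGraph} {P' : G'.V → ι}
  {G'' : DGraph} {P'' : G''.V → ι} {a : G.V} {a' : G'.V} {a'' : G''.V}

theorem phaseIn_comp (σ : InputIso G P G' P' a a') (σ' : InputIso G' P' G'' P'' a' a'') :
    phaseIn M (σ.comp σ') = phaseIn M σ ∘ phaseIn M σ' := by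
  funext q
  simp only [phaseIn, InputIso.comp, Function.comp, cast_cast, Equiv.trans_apply]

theorem phaseIn_phaseIn_inv (σ : InputIso G P G' P' a a') (q : PIn M G P a) :
    phaseIn M σ (phaseIn M σ.inv q) = q := by
  refine Prod.ext (eq_of_heq ((cast_heq _ _).trans (cast_heq _ _))) (funext fun γ => ?_)
  exact eq_of_heq ((cast_heq _ _).trans ((cast_heq _ _).trans
    (congr_arg_heq q.2 (σ.e.symm_apply_apply γ))))

variable [∀ i, TopologicalSpace (M i)] [∀ i, ChartedSpace (H i) (M i)]

theorem tcast_add {i j : ι} (h : i = j) {x : M i} {y : M j} (v w : TangentSpace (I i) x) :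
    (tcast I M h (v + w) : TangentSpace (I j) y) = tcast I M h v + tcast I M h w := by
  subst h; rfl

theorem tcast_smul {i j : ι} (h : i = j) {x : M i} {y : M j} (c : ℝ)
    (v : TangentSpace (I i) x) :
    (tcast I M h (c • v) : TangentSpace (I j) y) = c • tcast I M h v := by
  subst h; rfl

theorem tcast_tcast {i j k : ι} (h : i = j) (h' : j = k) {x : M i} {y : M j} {z : M k}
    (v : TangentSpace (I i) x) :
    (tcast I M h' (tcast I M h v : TangentSpace (I j) y) : TangentSpace (I k) z) =
      tcast I M (h.trans h') v := by
  subst h h'; rfl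

theorem tcast_self {i : ι} (h : i = i) {x y : M i} (v : TangentSpace (I i) x) :
    (tcast I M h v : TangentSpace (I i) y) = v :=
  rfl

theorem ctrlMap_add (σ : InputIso G P G' P' a a') (F₁ F₂ : Raw I M G P a) :
    ctrlMap I M σ (F₁ + F₂) = ctrlMap I M σ F₁ + ctrlMap I M σ F₂ :=
  funext fun _ => tcast_add I M _ _ _

theorem ctrlMap_smul (σ : InputIso G P G' P' a a') (c : ℝ) (F : Raw I M G P a) :
    ctrlMap I M σ (c • F) = c • ctrlMap I M σ F :=
  funext fun _ => tcast_smul I M _ _ _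

theorem ctrlMap_comp (σ : InputIso G P G' P' a a') (σ' : InputIso G' P' G'' P'' a' a'')
    (F : Raw I M G P a) :
    ctrlMap I M (σ.comp σ') F = ctrlMap I M σ' (ctrlMap I M σ F) := by
  funext q
  simp only [ctrlMap, tcast_tcast]
  exact congrArg (tcast I M _) (congrArg F (congrFun (phaseIn_comp M σ σ') q))

theorem ctrlMap_inv_ctrlMap (σ : InputIso G P G' P' a a') (F : Raw I M G P a) :
    ctrlMap I M σ.inv (ctrlMap I M σ F) = F := by
  funext q
  simp only [ctrlMap, tcast_tcast, tcast_self]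
  exact congrArg F (phaseIn_phaseIn_inv M σ q)

theorem IsInvariantSec.pullback {f : G.V → G'.V} (ψ : ∀ a, InputIso G P G' P' a (f a))
    {w' : ∀ a', Raw I M G' P' a'} (hw' : IsInvariantSec I M G' P' w') :
    IsInvariantSec I M G P fun a => ctrlMap I M (ψ a).inv (w' (f a)) := by
  intro a b σ
  dsimp only
  rw [← hw' (f a) (f b) (((ψ a).inv.comp σ).comp (ψ b)), ctrlMap_comp, ctrlMap_comp,
    ctrlMap_inv_ctrlMap]

variable {n : WithTop ℕ∞}

theorem contMDiff_cast {i j : ι} (h : i = j) :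
    ContMDiff (I i) (I j) n (cast (congrArg M h)) := by
  subst h; exact contMDiff_id

/-- The differential of `cast (congrArg M h) : M i → M j`. -/
def tangentCast {i j : ι} (h : i = j) :
    TangentBundle (I i) (M i) → TangentBundle (I j) (M j) :=
  fun z => ⟨cast (congrArg M h) z.1, tcast I M h z.2⟩

theorem contMDiff_tangentCast [∀ i, IsManifold (I i) 1 (M i)] {i j : ι} (h : i = j) :
    ContMDiff (I i).tangent (I j).tangent n (tangentCast I M h) := by
  subst h; exact contMDiff_id

variable [Fintype G.E] [DecidableEq G.V] [Fintype G'.E] [DecidableEq G'.V]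

theorem contMDiff_phaseIn (σ : InputIso G P G' P' a a') :
    ContMDiff (PInModel I G' P' a') (PInModel I G P a) n (phaseIn M σ) :=
  ((contMDiff_cast I M σ.hr).comp contMDiff_fst).prodMk <| contMDiff_pi_iff.2 fun γ =>
    (contMDiff_cast I M (σ.hl γ)).comp ((contMDiff_apply_pi (σ.e γ)).comp contMDiff_snd)

variable [∀ i, IsManifold (I i) ((⊤ : ℕ∞) : WithTop ℕ∞) (M i)]

theorem IsSmoothCtrl.ctrlMap (σ : InputIso G P G' P' a a') {F : Raw I M G P a}
    (hF : IsSmoothCtrl I M G P a F) : IsSmoothCtrl I M G' P' a' (_root_.ctrlMap I M σ F) := by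
  have hgraph : (fun q => ⟨q.1, _root_.ctrlMap I M σ F q⟩ :
      PIn M G' P' a' → TangentBundle (I (P' a')) (M (P' a'))) =
      tangentCast I M σ.hr.symm ∘ (fun q => ⟨q.1, F q⟩ :
        PIn M G P a → TangentBundle (I (P a)) (M (P a))) ∘ phaseIn M σ := by
    funext q
    exact Bundle.TotalSpace.ext (cast_cast _ _ q.1).symm HEq.rfl
  unfold IsSmoothCtrl
  rw [hgraph]
  exact ((contMDiff_tangentCast I M σ.hr.symm).comp hF).comp (contMDiff_phaseIn I M σ)

theorem IsSmoothSec.pullback {f : G.V → G'.V} (ψ : ∀ a, InputIso G P G' P' a (f a))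
    {w' : ∀ a', Raw I M G' P' a'} (hw' : IsSmoothSec I M G' P' w') :
    IsSmoothSec I M G P fun a => ctrlMap I M (ψ a).inv (w' (f a)) :=
  fun a => (hw' (f a)).ctrlMap I M (ψ a).inv

end Network

/-- **Pullback along a fibration preserves invariant virtual vector fields.**
For a fibration of networks `φ : (G,P) → (G',P')`, the pullback map
`φ* : S(G',P') → S(G,P)`, `(φ* w')_a = Ctrl(φ_a)⁻¹ (w'_{φ(a)})`, is linear (additive and
homogeneous, and maps smooth sections to smooth sections), and it maps the subspace
`V(G',P')` of groupoid-invariant virtual vector fields into `V(G,P)`. -/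
theorem pullback_linear_preserves_invariant
    {G G' : DGraph} [Fintype G.E] [DecidableEq G.V] [Fintype G'.E] [DecidableEq G'.V]
    (φ : GraphMap G G') (hφ : φ.IsFibration)
    {P : G.V → ι} {P' : G'.V → ι} (h : ∀ a, P' (φ.vmap a) = P a) :
    (∀ w₁ w₂ : ∀ a', Raw II MM G' P' a',
      pullbackVF II MM φ hφ h (w₁ + w₂) =
        pullbackVF II MM φ hφ h w₁ + pullbackVF II MM φ hφ h w₂) ∧
    (∀ (c : ℝ) (w' : ∀ a', Raw II MM G' P' a'),
      pullbackVF II MM φ hφ h (c • w') = c • pullbackVF II MM φ hφ h w') ∧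
    (∀ w' : ∀ a', Raw II MM G' P' a',
      IsSmoothSec II MM G' P' w' → IsSmoothSec II MM G P (pullbackVF II MM φ hφ h w')) ∧
    (∀ w' : ∀ a', Raw II MM G' P' a',
      IsSmoothSec II MM G' P' w' → IsInvariantSec II MM G' P' w' →
        IsInvariantSec II MM G P (pullbackVF II MM φ hφ h w')) :=
  ⟨fun _ _ => funext fun a => ctrlMap_add II MM (fibIso φ hφ h a).inv _ _,
    fun _ _ => funext fun a => ctrlMap_smul II MM (fibIso φ hφ h a).inv _ _,
    fun _ hw' => hw'.pullback II MM (fibIso φ hφ h),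
    fun _ _ hw' => hw'.pullback II MM (fibIso φ hφ h)⟩
end

section
/- Let φ : (G,P) → (G',P') be a fibration of networks. Then for every groupoid-invariant virtual vector field w' ∈ V(G',P'), the total phase space map Pφ : PG' → PG intertwines the interconnected vector fields: D(Pφ) ∘ I'(w') = I(φ*w') ∘ Pφ, where I, I' are the interconnection maps of the two networks. -/
open Manifold

variable {ι : Type} {EE : ι → Type} [∀ i, NormedAddCommGroup (EE i)]
  [∀ i, NormedSpace ℝ (EE i)] {HH : ι → Type} [∀ i, TopologicalSpace (HH i)]
  (II : ∀ i, ModelWithCorners ℝ (EE i) (HH i))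
  (MM : ι → Type) [∀ i, TopologicalSpace (MM i)] [∀ i, ChartedSpace (HH i) (MM i)]
  [∀ i, IsManifold (II i) ((⊤ : ℕ∞) : WithTop ℕ∞) (MM i)]

/-- The total phase space map `Pφ : PG' → PG` induced by a map of networks, defined
componentwise by `(Pφ x) a = x (φ a)`. -/
def phaseMap {G G' : DGraph} (φ : GraphMap G G')
    (P : G.V → ι) (P' : G'.V → ι) (h : ∀ a, P' (φ.vmap a) = P a) :
    (∀ a' : G'.V, MM (P' a')) → (∀ a : G.V, MM (P a)) :=
  fun x a => cast (congrArg MM (h a)) (x (φ.vmap a))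

/-- The canonical map `P j_a : PG → P I(a)`, `x ↦ (x_a, (x_{s(γ)})_{γ ∈ t⁻¹(a)})`. -/
def jMap (G : DGraph) (P : G.V → ι) (a : G.V) (x : ∀ b, MM (P b)) : PIn MM G P a :=
  (x a, fun γ => x (G.src γ.1))

/-- The interconnection map `𝓘 : S(G,P) → Γ(T PG)`: the vector field `𝓘(w)` on the total
phase space `PG` is determined by its components `D(P ι_a) ∘ 𝓘(w) = w_a ∘ P j_a`,
recorded here as `𝓘(w) x a = w_a (P j_a x) ∈ T_{x a} P(a)` via `T(PG) ≅ ⊓_a T P(a)`. -/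
def interconnect {G : DGraph} (P : G.V → ι) (w : ∀ a, Raw II MM G P a)
    (x : ∀ a, MM (P a)) (a : G.V) : TangentSpace (II (P a)) (x a) :=
  w a (jMap MM G P a x)

/-! A fibration identifies the input tree of `a` with that of `φ(a)`, so that
`P j_a ∘ Pφ = P(φ_a) ∘ P j_{φ(a)}`. The pullback `(φ* w')_a = Ctrl(φ_a)⁻¹ (w'_{φ(a)})`
precomposes `w'_{φ(a)}` with `P(φ_a)⁻¹`, which cancels `P(φ_a)`. -/

theorem phaseIn_inv_phaseIn (M : ι → Type) {G : DGraph} {P : G.V → ι} {G' : DGraph}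
    {P' : G'.V → ι} {a : G.V} {a' : G'.V} (σ : InputIso G P G' P' a a') (q : PIn M G' P' a') :
    phaseIn M σ.inv (phaseIn M σ q) = q := by
  refine Prod.ext (by simp [phaseIn]) (funext fun γ' => eq_of_heq ?_)
  refine (cast_heq _ _).trans ((cast_heq _ _).trans ?_)
  exact congr_arg_heq q.2 (σ.e.apply_symm_apply γ')

theorem jMap_phaseMap (M : ι → Type) {G G' : DGraph} (φ : GraphMap G G')
    (hφ : φ.IsFibration) {P : G.V → ι} {P' : G'.V → ι} (h : ∀ a, P' (φ.vmap a) = P a)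
    (x : ∀ a' : G'.V, M (P' a')) (a : G.V) :
    jMap M G P a (phaseMap M φ P P' h x) =
      phaseIn M (fibIso φ hφ h a) (jMap M G' P' (φ.vmap a) x) := by
  refine Prod.ext rfl (funext fun γ => eq_of_heq ?_)
  refine (cast_heq _ _).trans (HEq.trans ?_ (cast_heq _ _).symm)
  exact congr_arg_heq x (φ.src_eq γ.1).symm

theorem fibration_intertwines_dynamics
    {G G' : DGraph}
    (φ : GraphMap G G') (hφ : φ.IsFibration)
    {P : G.V → ι} {P' : G'.V → ι} (h : ∀ a, P' (φ.vmap a) = P a)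
    (w' : ∀ a', Raw II MM G' P' a') :
    ∀ (x : ∀ a' : G'.V, MM (P' a')) (a : G.V),
      tcast II MM (h a) (interconnect II MM P' w' x (φ.vmap a)) =
        interconnect II MM P (pullbackVF II MM φ hφ h w') (phaseMap MM φ P P' h x) a := by
  intro x a
  rw [interconnect, interconnect, pullbackVF, ctrlMap, jMap_phaseMap MM φ hφ h]
  exact congrArg (fun q => tcast II MM (h a) (w' (φ.vmap a) q))
    (phaseIn_inv_phaseIn MM (fibIso φ hφ h a) _).symm
end
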